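/- arXiv:1804.00346 — 2 statements merged into one kernel-verified Lean document; each statement's English description precedes it below -/
import Mathlib

section
/- Let p ∈ [1/2, 1), q = 1−p, and let X₁, …, Xₙ be i.i.d. with P(X₁ = √(q/p)) = p, P(X₁ = −√(p/q)) = q. Define μ(z) = E[X₁³·1{|X₁| < z}] and σ²(z) = E[X₁²·1{|X₁| ≥ z}]. Then for every ε > 0 with nε² ≥ p/q, sup_{0 < z ≤ ε√n} { μ(z) + z·σ²(z) } = (p² + q²)/√(pq) = E[|X₁|³]. That is, the Esseen fraction with γ = 1 equals the Lyapunov fraction for this two-point distribution. -/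
/-!
Pointwise, `x³·1{|x| < z} + z·x²·1{|x| ≥ z} ≤ |x|³`, so `μ(z) + z σ²(z) ≤ E|X₁|³` for every
`z > 0` and every law with a finite third absolute moment. For `p ≥ 1/2` the negative atom
`-√(p/q)` has the larger modulus; at `z = √(p/q)` the pointwise inequality is an equality at both
atoms, and `n ε² ≥ p/q` is exactly the condition that this `z` lies in `(0, ε√n]`.
-/

open MeasureTheory

/-- The centered unit-variance two-point distribution `F_p`. -/
noncomputable def twoPoint (p : ℝ) : Measure ℝ :=
  ENNReal.ofReal p • Measure.dirac (Real.sqrt ((1 - p) / p))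
    + ENNReal.ofReal (1 - p) • Measure.dirac (-Real.sqrt (p / (1 - p)))

noncomputable def esseenIntegrand (z x : ℝ) : ℝ :=
  (if |x| < z then x ^ 3 else 0) + z * if z ≤ |x| then x ^ 2 else 0

lemma mul_sq_le_abs_pow_three {z x : ℝ} (h : z ≤ |x|) : z * x ^ 2 ≤ |x| ^ 3 :=
  calc z * x ^ 2 ≤ |x| * x ^ 2 := mul_le_mul_of_nonneg_right h (sq_nonneg x)
    _ = |x| ^ 3 := by rw [← sq_abs]; ring

lemma esseenIntegrand_le_abs_pow_three (z x : ℝ) :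
    esseenIntegrand z x ≤ |x| ^ 3 := by
  unfold esseenIntegrand
  split_ifs with hlt hle hle
  · exact absurd hle (not_le.2 hlt)
  · simpa [← abs_pow] using le_abs_self (x ^ 3)
  · rw [zero_add]
    exact mul_sq_le_abs_pow_three hle
  · exact absurd (le_of_not_gt hlt) hle

lemma esseenIntegrand_eq_abs_pow_three {z x : ℝ} (hxz : |x| ≤ z) (hx : |x| < z → 0 ≤ x) :
    esseenIntegrand z x = |x| ^ 3 := by
  unfold esseenIntegrand
  rcases hxz.lt_or_eq with hlt | heq
  · rw [if_pos hlt, if_neg (not_le.2 hlt), abs_of_nonneg (hx hlt)]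
    ring
  · rw [if_neg heq.not_lt, if_pos heq.ge, ← heq, ← sq_abs x]
    ring

section Truncated

variable {μ : Measure ℝ} (h3 : Integrable (fun x ↦ |x| ^ 3) μ) {z : ℝ}
include h3

lemma integrable_truncated_cube :
    Integrable (fun x : ℝ ↦ if |x| < z then x ^ 3 else 0) μ := by
  refine h3.mono (Measurable.aestronglyMeasurable ?_) (ae_of_all _ fun x ↦ ?_)
  · exact Measurable.ite (measurableSet_lt measurable_abs measurable_const) (by fun_prop)
      measurable_const
  · split_ifs <;> simp

lemma integrable_tail_sq (hz : 0 < z) :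
    Integrable (fun x : ℝ ↦ if z ≤ |x| then x ^ 2 else 0) μ := by
  refine (h3.const_mul z⁻¹).mono' (Measurable.aestronglyMeasurable ?_) (ae_of_all _ fun x ↦ ?_)
  · exact Measurable.ite (measurableSet_le measurable_const measurable_abs) (by fun_prop)
      measurable_const
  split_ifs with hle
  · rw [norm_pow, Real.norm_eq_abs, le_inv_mul_iff₀ hz, sq_abs]
    exact mul_sq_le_abs_pow_three hle
  · simp only [norm_zero]
    positivity

lemma integrable_esseenIntegrand (hz : 0 < z) : Integrable (esseenIntegrand z) μ :=
  (integrable_truncated_cube h3).add ((integrable_tail_sq h3 hz).const_mul z)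

lemma integral_add_mul_integral_eq_integral_esseenIntegrand (hz : 0 < z) :
    (∫ x, (if |x| < z then x ^ 3 else 0) ∂μ) + z * ∫ x, (if z ≤ |x| then x ^ 2 else 0) ∂μ
      = ∫ x, esseenIntegrand z x ∂μ := by
  rw [← integral_const_mul, ← integral_add (integrable_truncated_cube h3)
    ((integrable_tail_sq h3 hz).const_mul z)]
  rfl

lemma add_mul_integral_le_integral_abs_pow_three (hz : 0 < z) :
    (∫ x, (if |x| < z then x ^ 3 else 0) ∂μ) + z * ∫ x, (if z ≤ |x| then x ^ 2 else 0) ∂μ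
      ≤ ∫ x, |x| ^ 3 ∂μ := by
  rw [integral_add_mul_integral_eq_integral_esseenIntegrand h3 hz]
  exact integral_mono (integrable_esseenIntegrand h3 hz) h3 (esseenIntegrand_le_abs_pow_three z)

end Truncated

lemma integrable_twoPoint (p : ℝ) (f : ℝ → ℝ) : Integrable f (twoPoint p) :=
  ((integrable_dirac (by simp)).smul_measure ENNReal.ofReal_ne_top).add_measure
    ((integrable_dirac (by simp)).smul_measure ENNReal.ofReal_ne_top)

lemma integral_twoPoint {p : ℝ} (hp0 : 0 ≤ p) (hp1 : p ≤ 1) (f : ℝ → ℝ) :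
    ∫ x, f x ∂(twoPoint p)
      = p * f (Real.sqrt ((1 - p) / p)) + (1 - p) * f (-Real.sqrt (p / (1 - p))) := by
  obtain ⟨h₁, h₂⟩ := integrable_add_measure.1 (integrable_twoPoint p f)
  rw [twoPoint, integral_add_measure h₁ h₂, integral_smul_measure, integral_smul_measure,
    integral_dirac, integral_dirac, ENNReal.toReal_ofReal hp0,
    ENNReal.toReal_ofReal (sub_nonneg.2 hp1), smul_eq_mul, smul_eq_mul]

lemma integral_abs_pow_three_twoPoint {p : ℝ} (hp0 : 0 < p) (hp1 : p < 1) :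
    ∫ x, |x| ^ 3 ∂(twoPoint p) = (p ^ 2 + (1 - p) ^ 2) / Real.sqrt (p * (1 - p)) := by
  have hq0 : 0 < 1 - p := sub_pos.2 hp1
  rw [integral_twoPoint hp0.le hp1.le, abs_neg, abs_of_nonneg (Real.sqrt_nonneg _),
    abs_of_nonneg (Real.sqrt_nonneg _), Real.sqrt_div hq0.le, Real.sqrt_div hp0.le,
    Real.sqrt_mul hp0.le]
  have hs := Real.sq_sqrt hp0.le
  have ht := Real.sq_sqrt hq0.le
  have : 0 < Real.sqrt p := Real.sqrt_pos.2 hp0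
  have : 0 < Real.sqrt (1 - p) := Real.sqrt_pos.2 hq0
  field_simp
  rw [show √(1 - p) ^ 6 = (√(1 - p) ^ 2) ^ 3 by ring, show √p ^ 6 = (√p ^ 2) ^ 3 by ring,
    hs, ht]
  ring

lemma sqrt_one_sub_div_le_sqrt_div_one_sub {p : ℝ} (hp : 1 / 2 ≤ p) (hp1 : p < 1) :
    Real.sqrt ((1 - p) / p) ≤ Real.sqrt (p / (1 - p)) := by
  refine Real.sqrt_le_sqrt ((div_le_one₀ (by linarith)).2 (by linarith) |>.trans ?_)
  exact (one_le_div₀ (by linarith)).2 (by linarith)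

lemma add_mul_integral_twoPoint_eq_integral_abs_pow_three {p : ℝ} (hp : 1 / 2 ≤ p)
    (hp1 : p < 1) :
    let z := Real.sqrt (p / (1 - p))
    (∫ x, (if |x| < z then x ^ 3 else 0) ∂(twoPoint p))
        + z * ∫ x, (if z ≤ |x| then x ^ 2 else 0) ∂(twoPoint p)
      = ∫ x, |x| ^ 3 ∂(twoPoint p) := by
  intro z
  have hz : 0 < z := Real.sqrt_pos.2 (div_pos (by linarith) (by linarith))
  have habs : |-z| = z := by rw [abs_neg, abs_of_pos hz]
  rw [integral_add_mul_integral_eq_integral_esseenIntegrand (integrable_twoPoint p _) hz,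
    integral_twoPoint (by linarith) hp1.le, integral_twoPoint (by linarith) hp1.le,
    esseenIntegrand_eq_abs_pow_three habs.le (by simp [habs]),
    esseenIntegrand_eq_abs_pow_three
      ((abs_of_nonneg (Real.sqrt_nonneg _)).trans_le (sqrt_one_sub_div_le_sqrt_div_one_sub hp hp1))
      (fun _ ↦ Real.sqrt_nonneg _)]

theorem twoPoint_esseen_eq_lyapunov_general (p : ℝ) (hp : p ∈ Set.Ico (1 / 2 : ℝ) 1)
    (n : ℕ) (ε : ℝ) (hε : 0 < ε)
    (hcond : p / (1 - p) ≤ (n : ℝ) * ε ^ 2) :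
    sSup {y : ℝ | ∃ z : ℝ, 0 < z ∧ z ≤ ε * Real.sqrt n ∧
        y = (∫ x, (if |x| < z then x ^ 3 else 0) ∂(twoPoint p))
          + z * ∫ x, (if z ≤ |x| then x ^ 2 else 0) ∂(twoPoint p)}
      = (p ^ 2 + (1 - p) ^ 2) / Real.sqrt (p * (1 - p)) ∧
    (p ^ 2 + (1 - p) ^ 2) / Real.sqrt (p * (1 - p)) = ∫ x, |x| ^ 3 ∂(twoPoint p) := by
  obtain ⟨hp_half, hp1⟩ := hp
  have hlyapunov := integral_abs_pow_three_twoPoint (by linarith) hp1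
  refine ⟨Eq.trans ?_ hlyapunov, hlyapunov.symm⟩
  refine IsGreatest.csSup_eq ⟨⟨Real.sqrt (p / (1 - p)), ?_, ?_,
    (add_mul_integral_twoPoint_eq_integral_abs_pow_three hp_half hp1).symm⟩, ?_⟩
  · exact Real.sqrt_pos.2 (div_pos (by linarith) (by linarith))
  · calc Real.sqrt (p / (1 - p)) ≤ Real.sqrt (n * ε ^ 2) := Real.sqrt_le_sqrt hcond
      _ = ε * Real.sqrt n := by
        rw [Real.sqrt_mul (Nat.cast_nonneg n), Real.sqrt_sq hε.le, mul_comm]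
  · rintro y ⟨z, hz, -, rfl⟩
    exact add_mul_integral_le_integral_abs_pow_three (integrable_twoPoint p _) hz

theorem twoPoint_esseen_eq_lyapunov (p : ℝ) (hp : p ∈ Set.Ico (1 / 2 : ℝ) 1)
    (n : ℕ) (hn : 0 < n) (ε : ℝ) (hε : 0 < ε)
    (hcond : p / (1 - p) ≤ (n : ℝ) * ε ^ 2) :
    sSup {y : ℝ | ∃ z : ℝ, 0 < z ∧ z ≤ ε * Real.sqrt n ∧
        y = (∫ x, (if |x| < z then x ^ 3 else 0) ∂(twoPoint p))
          + z * ∫ x, (if z ≤ |x| then x ^ 2 else 0) ∂(twoPoint p)}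
      = (p ^ 2 + (1 - p) ^ 2) / Real.sqrt (p * (1 - p)) ∧
    (p ^ 2 + (1 - p) ^ 2) / Real.sqrt (p * (1 - p)) = ∫ x, |x| ^ 3 ∂(twoPoint p) :=
  twoPoint_esseen_eq_lyapunov_general p hp n ε hε hcond
end

section
/- For θ ∈ (0, 2π) let a(θ) = 2(1−cos θ)/θ² − sin θ/(2θ), b(θ) = (1−cos θ)/θ⁴ − sin θ/(2θ³), and for τ > 0 define k(τ) = sup_{0<θ≤2π} { a(θ) − 8τ·√(a(θ)·b(θ)) }. Then k(τ) > 0 if and only if τ < π/4. -/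
noncomputable def a (θ : ℝ) : ℝ :=
  2 * (1 - Real.cos θ) / θ ^ 2 - Real.sin θ / (2 * θ)

noncomputable def b (θ : ℝ) : ℝ :=
  (1 - Real.cos θ) / θ ^ 4 - Real.sin θ / (2 * θ ^ 3)

noncomputable def kFun (τ : ℝ) : ℝ :=
  sSup {y : ℝ | ∃ θ : ℝ, 0 < θ ∧ θ ≤ 2 * Real.pi ∧
    y = a θ - 8 * τ * Real.sqrt (a θ * b θ)}

/-! Writing θ = 2x, one has `a (2x) = sin x (2 sin x - x cos x) / (2x²)` and
`b (2x) = sin x (sin x - x cos x) / (8x⁴)`. Hence `a θ - θ² b θ = sin² x / (2x²) > 0`, while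
`(2π)² b θ - a θ` is `sin x / (2x⁴)` times `(π² - 2x²) sin x - x (π² - x²) cos x`, which is
nonnegative on `[0, π]`. So `θ² b θ < a θ ≤ (2π)² b θ` on `(0, 2π)`: for `8τ ≥ 2π` every value
`a - 8τ √(ab)` is `≤ 0`, and for `8τ < 2π` the angle `θ = π + 4τ` lies in `(8τ, 2π)` and gives a
positive value. -/

open Real

lemma le_mul_sqrt_mul_of_le_sq_mul {x y c : ℝ} (hc : 0 ≤ c) (h : x ≤ c ^ 2 * y) :
    x ≤ c * √(x * y) := by
  rcases le_or_gt x 0 with hx | hx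
  · exact hx.trans (by positivity)
  · rw [← sqrt_sq hc, ← sqrt_mul (sq_nonneg c)]
    exact le_sqrt_of_sq_le (by nlinarith)

lemma mul_sqrt_mul_lt_of_sq_mul_lt {x y c : ℝ} (hy : 0 ≤ y) (h : c ^ 2 * y < x) :
    c * √(x * y) < x := by
  have hx : 0 < x := (by positivity : 0 ≤ c ^ 2 * y).trans_lt h
  calc c * √(x * y) ≤ |c| * √(x * y) := by gcongr; exact le_abs_self c
    _ = √(c ^ 2 * (x * y)) := by rw [sqrt_mul (sq_nonneg c), sqrt_sq_eq_abs]
    _ < √(x ^ 2) := sqrt_lt_sqrt (by positivity) (by nlinarith)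
    _ = x := sqrt_sq hx.le

lemma cos_le_one_sub_sq_div_two_add_pow_four_div (x : ℝ) :
    cos x ≤ 1 - x ^ 2 / 2 + x ^ 4 / 24 := by
  wlog hx : 0 ≤ x
  · simpa [Even.neg_pow (by decide : Even 4)] using this (-x) (by linarith)
  let f (t : ℝ) : ℝ := 1 - t ^ 2 / 2 + t ^ 4 / 24 - cos t
  have hderiv (t : ℝ) : deriv f t = sin t - (t - t ^ 3 / 6) := by
    simp (disch := fun_prop) [f]
    ring
  have hmono : MonotoneOn f (Set.Ici 0) := by
    apply monotoneOn_of_deriv_nonneg (convex_Ici 0) (by fun_prop) (by fun_prop)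
    intro t ht
    rw [interior_Ici] at ht
    rw [hderiv, sub_nonneg]
    exact sin_ge_sub_cube ht.le
  have h0 : f 0 ≤ f x := hmono Set.self_mem_Ici hx hx
  simp only [f] at h0
  norm_num at h0
  linarith

lemma mul_cos_le_sin {x : ℝ} (hx : 0 ≤ x) (hxπ : x ≤ π) : x * cos x ≤ sin x := by
  rcases lt_or_ge x (π / 2) with hx₁ | hx₁
  · have hcos : 0 < cos x := cos_pos_of_mem_Ioo ⟨by linarith, hx₁⟩
    have := le_tan hx hx₁
    rwa [tan_eq_sin_div_cos, le_div_iff₀ hcos] at this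
  · have hcos : cos x ≤ 0 := cos_nonpos_of_pi_div_two_le_of_le hx₁ (by linarith)
    exact (mul_nonpos_of_nonneg_of_nonpos hx hcos).trans (sin_nonneg_of_nonneg_of_le_pi hx hxπ)

lemma mul_cos_le_mul_sin {x : ℝ} (hx : 0 ≤ x) (hxπ : x ≤ π) :
    x * (π ^ 2 - x ^ 2) * cos x ≤ (π ^ 2 - 2 * x ^ 2) * sin x := by
  have hπ₁ := pi_gt_three
  have hπ₂ := pi_lt_d2
  have hB : 0 ≤ x * (π ^ 2 - x ^ 2) := mul_nonneg hx (by nlinarith)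
  rcases le_or_gt (2 * x ^ 2) (π ^ 2) with hx₁ | hx₁
  · have hA : 0 ≤ π ^ 2 - 2 * x ^ 2 := by linarith
    -- The Taylor remainder is `x³ (x⁴ - (4 + π²) x² + 8π² - 24) / 24`, and this quadratic in `x²`
    -- has negative discriminant.
    have hQ : 0 < 8 * π ^ 2 - 24 - (4 + π ^ 2) ^ 2 / 4 := by
      have h9 : 9 < π ^ 2 := by nlinarith
      have h15 : π ^ 2 < 15 := by nlinarith
      nlinarith [mul_pos (sub_pos.2 h9) (sub_pos.2 h15)]
    calc x * (π ^ 2 - x ^ 2) * cos x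
        ≤ x * (π ^ 2 - x ^ 2) * (1 - x ^ 2 / 2 + x ^ 4 / 24) :=
          mul_le_mul_of_nonneg_left (cos_le_one_sub_sq_div_two_add_pow_four_div x) hB
      _ ≤ (π ^ 2 - 2 * x ^ 2) * (x - x ^ 3 / 6) := by
          nlinarith [mul_nonneg (pow_nonneg hx 3) (sq_nonneg (x ^ 2 - (4 + π ^ 2) / 2)),
            mul_nonneg (pow_nonneg hx 3) hQ.le]
      _ ≤ (π ^ 2 - 2 * x ^ 2) * sin x := mul_le_mul_of_nonneg_left (sin_ge_sub_cube hx) hA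
  · obtain ⟨u, rfl⟩ : ∃ u, x = π - u := ⟨π - x, by ring⟩
    rw [sin_pi_sub, cos_pi_sub]
    have hu₀ : 0 ≤ u := by linarith
    have hu₁ : u ≤ 1 := by nlinarith
    have hA : π ^ 2 - 2 * (π - u) ^ 2 ≤ 0 := by linarith
    have hsin := mul_le_mul_of_nonpos_left (sin_le hu₀) hA
    have hcos := mul_le_mul_of_nonneg_left (one_sub_sq_div_two_le_cos (x := u)) hB
    -- The remainder is `u (π² (1 - u²) + u (π - u) + u³ (3π - u) / 2)`.
    nlinarith [mul_nonneg hu₀ (sub_nonneg.2 ((sq_le_one_iff₀ hu₀).2 hu₁)),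
      mul_nonneg hu₀ (mul_nonneg hu₀ (by linarith : 0 ≤ π - u)),
      mul_nonneg (pow_nonneg hu₀ 4) (by linarith : 0 ≤ 3 * π - u)]

lemma a_two_mul {x : ℝ} (hx : x ≠ 0) :
    a (2 * x) = sin x * (2 * sin x - x * cos x) / (2 * x ^ 2) := by
  rw [a, sin_two_mul, cos_two_mul, ← sin_sq_add_cos_sq x]
  field_simp
  ring

lemma b_two_mul {x : ℝ} (hx : x ≠ 0) :
    b (2 * x) = sin x * (sin x - x * cos x) / (8 * x ^ 4) := by
  rw [b, sin_two_mul, cos_two_mul, ← sin_sq_add_cos_sq x]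
  field_simp
  ring

lemma a_le_three_halves (θ : ℝ) : a θ ≤ 3 / 2 := by
  have h₁ : 2 * (1 - cos θ) / θ ^ 2 ≤ 1 :=
    div_le_one_of_le₀ (by linarith [one_sub_sq_div_two_le_cos (x := θ)]) (sq_nonneg θ)
  have h₂ : -(sin θ / (2 * θ)) ≤ 1 / 2 :=
    calc -(sin θ / (2 * θ)) ≤ |sin θ / (2 * θ)| := neg_le_abs _
      _ = |sin θ| / (2 * |θ|) := by rw [abs_div, abs_mul, abs_two]
      _ ≤ 1 / 2 :=
        div_le_of_le_mul₀ (by positivity) (by norm_num) (by linarith [abs_sin_le_abs (x := θ)])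
  rw [a]
  linarith

lemma b_nonneg {θ : ℝ} (hθ₀ : 0 < θ) (hθ : θ ≤ 2 * π) : 0 ≤ b θ := by
  obtain ⟨x, rfl⟩ : ∃ x, θ = 2 * x := ⟨θ / 2, by ring⟩
  rw [b_two_mul (by linarith)]
  have hsin := sin_nonneg_of_nonneg_of_le_pi (x := x) (by linarith) (by linarith)
  have hfactor := sub_nonneg.2 (mul_cos_le_sin (x := x) (by linarith) (by linarith))
  positivity

lemma a_le_sq_two_pi_mul_b {θ : ℝ} (hθ₀ : 0 < θ) (hθ : θ ≤ 2 * π) :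
    a θ ≤ (2 * π) ^ 2 * b θ := by
  obtain ⟨x, rfl⟩ : ∃ x, θ = 2 * x := ⟨θ / 2, by ring⟩
  have hx : 0 < x := by linarith
  have hsin := sin_nonneg_of_nonneg_of_le_pi hx.le (by linarith)
  have hfactor := sub_nonneg.2 (mul_cos_le_mul_sin hx.le (by linarith))
  have hgap : (2 * π) ^ 2 * b (2 * x) - a (2 * x) =
      sin x * ((π ^ 2 - 2 * x ^ 2) * sin x - x * (π ^ 2 - x ^ 2) * cos x) / (2 * x ^ 4) := by
    rw [a_two_mul hx.ne', b_two_mul hx.ne']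
    field_simp
    ring
  rw [← sub_nonneg, hgap]
  positivity

lemma sq_mul_b_lt_a {θ : ℝ} (hθ₀ : 0 < θ) (hθ : θ < 2 * π) : θ ^ 2 * b θ < a θ := by
  obtain ⟨x, rfl⟩ : ∃ x, θ = 2 * x := ⟨θ / 2, by ring⟩
  have hx : 0 < x := by linarith
  have hsin := sin_pos_of_pos_of_lt_pi hx (by linarith)
  have hgap : a (2 * x) - (2 * x) ^ 2 * b (2 * x) = sin x ^ 2 / (2 * x ^ 2) := by
    rw [a_two_mul hx.ne', b_two_mul hx.ne']
    field_simp
    ring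
  rw [← sub_pos, hgap]
  positivity

theorem kFun_pos_iff (τ : ℝ) (hτ : 0 < τ) : 0 < kFun τ ↔ τ < Real.pi / 4 := by
  constructor
  · intro hk
    by_contra! hτπ
    refine hk.not_ge (csSup_le ⟨_, 2 * π, two_pi_pos, le_rfl, rfl⟩ ?_)
    rintro _ ⟨θ, hθ₀, hθ, rfl⟩
    have hab : a θ ≤ (8 * τ) ^ 2 * b θ := (a_le_sq_two_pi_mul_b hθ₀ hθ).trans <|
      mul_le_mul_of_nonneg_right (pow_le_pow_left₀ (by positivity) (by linarith) 2)
        (b_nonneg hθ₀ hθ)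
    exact sub_nonpos.2 (le_mul_sqrt_mul_of_le_sq_mul (by positivity) hab)
  · intro hτπ
    set θ := π + 4 * τ
    have hθ₀ : 0 < θ := by positivity
    have hθ : θ < 2 * π := by linarith
    have hab : (8 * τ) ^ 2 * b θ < a θ := lt_of_le_of_lt
      (mul_le_mul_of_nonneg_right (pow_le_pow_left₀ (by positivity) (by linarith) 2)
        (b_nonneg hθ₀ hθ.le))
      (sq_mul_b_lt_a hθ₀ hθ)
    have hbdd : BddAbove
        {y : ℝ | ∃ θ : ℝ, 0 < θ ∧ θ ≤ 2 * π ∧ y = a θ - 8 * τ * √(a θ * b θ)} := by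
      refine ⟨3 / 2, ?_⟩
      rintro _ ⟨θ, -, -, rfl⟩
      linarith [a_le_three_halves θ, (by positivity : 0 ≤ 8 * τ * √(a θ * b θ))]
    calc 0 < a θ - 8 * τ * √(a θ * b θ) :=
          sub_pos.2 (mul_sqrt_mul_lt_of_sq_mul_lt (b_nonneg hθ₀ hθ.le) hab)
      _ ≤ kFun τ := le_csSup hbdd ⟨θ, hθ₀, hθ.le, rfl⟩
end
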